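/- Let μ be the law of an N×D random matrix X whose entries are i.i.d. standard Gaussian N(0,1), and let c ≥ 0. Then ∫ log det(I_D + c·X(ω)ᵀ·X(ω)) dμ(ω) ≤ D · log(1 + c·N). In particular, for signal-to-noise ratio s ≥ 0 and c = s/D, the channel capacity C = (1/2)∫ log det(I_D + (s/D)·XᵀX) dμ satisfies C ≤ (D/2)·log((N/D)·s + 1). -/

import Mathlib

open Matrix Real MeasureTheory ProbabilityTheory

/-! Write `Q = XᵀX`. The bound is Jensen's inequality for the concave map `Q ↦ log det (1 + c Q)`,
made explicit: by the tangent-line inequality `log x ≤ log a + x / a - 1` applied to each eigenvalue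
of `1 + c Q`, `log det (1 + c Q)` is bounded by an affine function of `tr Q`, and
`E[tr Q] = N D E[x²]`. Choosing `a = 1 + c N E[x²]` makes the expectation of the remainder
`(D + c tr Q) / a - D` vanish, leaving `D log a`. -/

lemma Real.log_le_log_add_div_sub_one {x a : ℝ} (hx : 0 < x) (ha : 0 < a) :
    log x ≤ log a + x / a - 1 := by
  have := log_le_sub_one_of_pos (div_pos hx ha)
  rw [log_div hx.ne' ha.ne'] at this
  linarith

namespace Matrix

variable {n : Type*} [Fintype n] [DecidableEq n]

lemma IsHermitian.det_one_add_smul {Q : Matrix n n ℝ} (hQ : Q.IsHermitian) (c : ℝ) :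
    (1 + c • Q).det = ∏ i, (1 + c * hQ.eigenvalues i) := by
  have h : 1 + c • Q = cfc (fun x => 1 + c * x) Q := by
    rw [cfc_const_add 1 (fun x => c * x) Q, cfc_const_mul_id c Q, map_one]
  rw [h, hQ.cfc_eq]
  simp [IsHermitian.cfc, -Unitary.conjStarAlgAut_apply]

namespace PosSemidef

variable {Q : Matrix n n ℝ} {c : ℝ}

lemma one_le_one_add_mul_eigenvalues (hQ : Q.PosSemidef) (hc : 0 ≤ c) (i : n) :
    1 ≤ 1 + c * hQ.isHermitian.eigenvalues i :=
  le_add_of_nonneg_right (mul_nonneg hc (hQ.eigenvalues_nonneg i))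

lemma log_det_one_add_smul_nonneg (hQ : Q.PosSemidef) (hc : 0 ≤ c) :
    0 ≤ log (1 + c • Q).det := by
  rw [hQ.isHermitian.det_one_add_smul]
  exact log_nonneg <| Finset.one_le_prod fun i _ => hQ.one_le_one_add_mul_eigenvalues hc i

lemma log_det_one_add_smul_le (hQ : Q.PosSemidef) (hc : 0 ≤ c) {a : ℝ} (ha : 0 < a) :
    log (1 + c • Q).det ≤ Fintype.card n * log a + (Fintype.card n + c * Q.trace) / a
      - Fintype.card n := by
  have hpos (i : n) : 0 < 1 + c * hQ.isHermitian.eigenvalues i :=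
    zero_lt_one.trans_le (hQ.one_le_one_add_mul_eigenvalues hc i)
  rw [hQ.isHermitian.det_one_add_smul, log_prod fun i _ => (hpos i).ne',
    hQ.isHermitian.trace_eq_sum_eigenvalues]
  calc ∑ i, log (1 + c * hQ.isHermitian.eigenvalues i)
      ≤ ∑ i, (log a + (1 + c * hQ.isHermitian.eigenvalues i) / a - 1) :=
        Finset.sum_le_sum fun i _ => log_le_log_add_div_sub_one (hpos i) ha
    _ = _ := by
        simp only [Finset.sum_sub_distrib, Finset.sum_add_distrib, ← Finset.sum_div,
          ← Finset.mul_sum, Finset.sum_const, Finset.card_univ, nsmul_eq_mul,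
          RCLike.ofReal_real_eq_id, id]
        ring

end PosSemidef

lemma trace_transpose_mul_self_of {ι κ : Type*} [Fintype ι] [Fintype κ] (X : ι → κ → ℝ) :
    ((of X)ᵀ * of X).trace = ∑ i, ∑ j, X i j ^ 2 := by
  simp only [trace, diag, mul_apply, transpose_apply, of_apply, sq]
  exact Finset.sum_comm

end Matrix

lemma integral_sq_gaussianReal (m : ℝ) (v : NNReal) :
    ∫ x, x ^ 2 ∂gaussianReal m v = m ^ 2 + v := by
  have h := variance_eq_sub (memLp_id_gaussianReal (μ := m) (v := v) 2)
  simp only [variance_id_gaussianReal, Pi.pow_apply, id, integral_id_gaussianReal] at h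
  linarith

lemma integrable_sq_gaussianReal (m : ℝ) (v : NNReal) :
    Integrable (fun x => x ^ 2) (gaussianReal m v) :=
  (memLp_id_gaussianReal 2).integrable_sq

section IIDMatrix

variable {ι κ : Type*} [Fintype ι] [Fintype κ] (ν : Measure ℝ) [IsProbabilityMeasure ν]

lemma measurePreserving_entry (i : ι) (j : κ) :
    MeasurePreserving (fun X : ι → κ → ℝ => X i j)
      (Measure.pi fun _ : ι => Measure.pi fun _ : κ => ν) ν :=
  (measurePreserving_eval (fun _ : κ => ν) j).comp (measurePreserving_eval _ i)

lemma integrable_entry_sq (hν : Integrable (fun x => x ^ 2) ν) (i : ι) (j : κ) :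
    Integrable (fun X : ι → κ → ℝ => X i j ^ 2)
      (Measure.pi fun _ : ι => Measure.pi fun _ : κ => ν) :=
  (measurePreserving_entry ν i j).integrable_comp_of_integrable hν

lemma integral_entry_sq (i : ι) (j : κ) :
    ∫ X : ι → κ → ℝ, X i j ^ 2 ∂(Measure.pi fun _ : ι => Measure.pi fun _ : κ => ν) =
      ∫ x, x ^ 2 ∂ν := by
  have h := measurePreserving_entry ν i j
  rw [← integral_map (f := fun x => x ^ 2) h.measurable.aemeasurable (by fun_prop), h.map_eq]

lemma integrable_trace_transpose_mul_self_of (hν : Integrable (fun x => x ^ 2) ν) :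
    Integrable (fun X : ι → κ → ℝ => ((of X)ᵀ * of X).trace)
      (Measure.pi fun _ : ι => Measure.pi fun _ : κ => ν) := by
  simp only [trace_transpose_mul_self_of]
  exact integrable_finsetSum _ fun i _ =>
    integrable_finsetSum _ fun j _ => integrable_entry_sq ν hν i j

lemma integral_trace_transpose_mul_self_of (hν : Integrable (fun x => x ^ 2) ν) :
    ∫ X : ι → κ → ℝ, ((of X)ᵀ * of X).trace
        ∂(Measure.pi fun _ : ι => Measure.pi fun _ : κ => ν) =
      Fintype.card ι * Fintype.card κ * ∫ x, x ^ 2 ∂ν := by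
  simp only [trace_transpose_mul_self_of]
  rw [integral_finsetSum _ fun i _ =>
    integrable_finsetSum _ fun j _ => integrable_entry_sq ν hν i j]
  simp only [integral_finsetSum _ fun j _ => integrable_entry_sq ν hν _ j, integral_entry_sq,
    Finset.sum_const, Finset.card_univ, nsmul_eq_mul]
  ring

theorem integral_log_det_one_add_smul_transpose_mul_self_le [DecidableEq κ]
    (hν : Integrable (fun x => x ^ 2) ν) {c : ℝ} (hc : 0 ≤ c) :
    ∫ X : ι → κ → ℝ, log (1 + c • ((of X)ᵀ * of X)).det
        ∂(Measure.pi fun _ : ι => Measure.pi fun _ : κ => ν) ≤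
      Fintype.card κ * log (1 + c * Fintype.card ι * ∫ x, x ^ 2 ∂ν) := by
  set m := ∫ x, x ^ 2 ∂ν
  set a := 1 + c * Fintype.card ι * m
  have ha : 0 < a := by
    have : 0 ≤ m := integral_nonneg fun x => sq_nonneg x
    positivity
  have hgram (X : ι → κ → ℝ) : ((of X)ᵀ * of X).PosSemidef := by
    simpa using posSemidef_conjTranspose_mul_self (of X)
  have htr := integrable_trace_transpose_mul_self_of (ι := ι) (κ := κ) ν hν
  calc ∫ X, log (1 + c • ((of X)ᵀ * of X)).det
        ∂(Measure.pi fun _ : ι => Measure.pi fun _ : κ => ν)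
      ≤ ∫ X, (Fintype.card κ * log a + (Fintype.card κ + c * ((of X)ᵀ * of X).trace) / a
          - Fintype.card κ) ∂(Measure.pi fun _ : ι => Measure.pi fun _ : κ => ν) :=
        integral_mono_of_nonneg (ae_of_all _ fun X => (hgram X).log_det_one_add_smul_nonneg hc)
          (by fun_prop) (ae_of_all _ fun X => (hgram X).log_det_one_add_smul_le hc ha)
    _ = Fintype.card κ * log a + (Fintype.card κ + c * (Fintype.card ι * Fintype.card κ * m)) / a
          - Fintype.card κ := by
        rw [integral_sub, integral_add, integral_div, integral_add, integral_const_mul c,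
          integral_trace_transpose_mul_self_of ν hν]
        · simp [m]
        all_goals fun_prop
    _ = Fintype.card κ * log a := by
        field_simp
        ring

end IIDMatrix

/-- Channel-capacity upper bound (feature form): for i.i.d. standard Gaussian
entries, `E[log det (I_D + c Xᵀ X)] ≤ D log (1 + c N)` for `c ≥ 0`; in
particular with `c = s/D` the channel capacity
`C = (1/2) E[log det (I_D + (s/D) Xᵀ X)]` satisfies `C ≤ (D/2) log ((N/D) s + 1)`. -/
theorem stmt_3 (N D : ℕ) (c : ℝ) (hc : 0 ≤ c) :
    (∫ X : Fin N → Fin D → ℝ,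
        Real.log (((1 : Matrix (Fin D) (Fin D) ℝ) + c • ((Matrix.of X)ᵀ * Matrix.of X)).det)
        ∂(Measure.pi fun _ : Fin N => Measure.pi fun _ : Fin D => gaussianReal 0 1)
      ≤ (D : ℝ) * Real.log (1 + c * N)) ∧
    (∀ s : ℝ, 0 ≤ s →
      (1 / 2 : ℝ) * ∫ X : Fin N → Fin D → ℝ,
          Real.log (((1 : Matrix (Fin D) (Fin D) ℝ)
              + (s / D) • ((Matrix.of X)ᵀ * Matrix.of X)).det)
          ∂(Measure.pi fun _ : Fin N => Measure.pi fun _ : Fin D => gaussianReal 0 1)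
        ≤ (D / 2 : ℝ) * Real.log ((N / D : ℝ) * s + 1)) := by
  have hbound (b : ℝ) (hb : 0 ≤ b) := by
    simpa [integral_sq_gaussianReal] using
      integral_log_det_one_add_smul_transpose_mul_self_le (ι := Fin N) (κ := Fin D)
        (gaussianReal 0 1) (integrable_sq_gaussianReal 0 1) hb
  refine ⟨hbound c hc, fun s hs => ?_⟩
  have h := hbound (s / D) (by positivity)
  rw [show 1 + s / D * N = (N / D : ℝ) * s + 1 by ring] at h
  linarith
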